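/- arXiv:0805.0268 — 5 statements merged into one kernel-verified Lean document; each statement's English description precedes it below -/
import Mathlib

section
/- Let (X_n)_{n≥1} be independent identically distributed random variables uniform on {0,1}, let (Y_i)_{i≥0} be the ABSG internal state sequence driven by X (Y_0 = ∅, Y_i = M(Y_{i−1}, X_i)), let H_j be the index of the j-th occurrence of ∅ in (Y_i)_{i≥1} (with H_0 = 0), Q_j := H_j − H_{j−1} − 2, and let (Z_j)_{j≥1} be the ABSG output bits. Then for every N ≥ 1 and every binary string z_1,…,z_N occurring with positive probability, conditionally on Z_1 = z_1, …, Z_N = z_N the random variables Q_1, …, Q_N are independent and satisfy P(Q_i = q | Z_1^N = z_1^N) = (1/2)^{q+1} for every q ∈ ℕ and every 1 ≤ i ≤ N; i.e., P(Q_1 = q_1, …, Q_N = q_N | Z_1^N = z_1^N) = ∏_{i=1}^N (1/2)^{q_i+1} for all q_1,…,q_N ∈ ℕ. -/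
open MeasureTheory ProbabilityTheory ENNReal

/-- ABSG state alphabet `{∅, 0, 1}` modeled as `Option Bool` (`none` is ∅), with
transition map `M(∅,b)=b`, `M(s,b) = ∅` if `s = b` and `= s` otherwise. -/
def absgM : Option Bool → Bool → Option Bool
  | none, b => some b
  | some s, b => if s = b then none else some s

/-- ABSG internal state sequence: `y 0 = ∅`, `y (i+1) = M (y i) (x (i+1))`. -/
def absgY (x : ℕ → Bool) : ℕ → Option Bool
  | 0 => none
  | i + 1 => absgM (absgY x i) (x (i + 1))

/-- `absgH x j` is the index of the `j`-th occurrence of ∅ in `(y i)_{i≥1}`, with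
`absgH x 0 = 0` (and junk value `0` via `sInf ∅` if there is no such occurrence). -/
noncomputable def absgH (x : ℕ → Bool) : ℕ → ℕ
  | 0 => 0
  | j + 1 => sInf {i | absgH x j < i ∧ absgY x i = none}

/-- `absgQ x j = h j − h (j−1) − 2`. -/
noncomputable def absgQ (x : ℕ → Bool) (j : ℕ) : ℕ :=
  absgH x j - absgH x (j - 1) - 2

/-- The `j`-th ABSG output bit: `z j = y (h j − 1)` if `q j = 0`, and its complement
otherwise. -/
noncomputable def absgZ (x : ℕ → Bool) (j : ℕ) : Bool :=
  if absgQ x j = 0 then (absgY x (absgH x j - 1)).getD false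
  else !(absgY x (absgH x j - 1)).getD false

/-!
Between two consecutive visits of the state to `∅`, the input is a block `s (¬s)^q s`: its gap is
`q` and its output bit is `s` if `q = 0` and `¬s` otherwise. Hence, on the almost sure event that
the state returns to `∅` infinitely often, `Z_1^N = z` and `Q_1^N = q` hold exactly when the input
starts with the `N` blocks determined by `z` and `q`, an event of probability
`2^{-∑ (q_i + 2)} = 2^{-N} ∏ 2^{-(q_i + 1)}`. Summing over `q` gives `P(Z_1^N = z) = 2^{-N}`, so
conditionally on `Z_1^N = z` the gaps have the product of geometric(1/2) laws.
-/

open Filter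

lemma forall_Icc_iff_forall_lt {p : ℕ → Prop} {N : ℕ} :
    (∀ j, 1 ≤ j → j ≤ N → p j) ↔ ∀ j < N, p (j + 1) :=
  ⟨fun h j hj => h (j + 1) (by omega) hj, fun h j h1 h2 => by
    simpa [Nat.sub_add_cancel h1] using h (j - 1) (by omega)⟩

lemma setOf_forall_Icc_eq_preimage {Ω α : Type*} (g : Ω → ℕ → α) (q : ℕ → α) (N : ℕ) :
    {ω | ∀ j, 1 ≤ j → j ≤ N → g ω j = q j} =
      (fun ω (i : Fin N) => g ω (i + 1)) ⁻¹' {fun i : Fin N => q (i + 1)} := by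
  ext ω
  simp [funext_iff, Fin.forall_iff, forall_Icc_iff_forall_lt]

lemma prod_Icc_one_eq_prod_fin {M : Type*} [CommMonoid M] (f : ℕ → M) (N : ℕ) :
    ∏ j ∈ Finset.Icc 1 N, f j = ∏ i : Fin N, f (i + 1) := by
  rw [← Finset.Ico_add_one_right_eq_Icc, Finset.prod_Ico_eq_prod_range,
    Fin.prod_univ_eq_prod_range (fun i => f (i + 1))]
  simp [add_comm]

theorem cond_preimage_eq_of_forall_singleton {Ω β : Type*} [MeasurableSpace Ω] {μ : Measure Ω}
    [MeasurableSpace β] [MeasurableSingletonClass β] [Countable β]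
    {ν : Measure β} [IsProbabilityMeasure ν]
    {S : Set Ω} {f : Ω → β} {c : ℝ≥0∞} (hc0 : c ≠ 0) (hc : c ≠ ∞)
    (h : ∀ b, NullMeasurableSet (S ∩ f ⁻¹' {b}) μ ∧ μ (S ∩ f ⁻¹' {b}) = c * ν {b})
    (P : Set β) : μ[f ⁻¹' P | S] = ν P := by
  have hP : ∀ P : Set β, μ (S ∩ f ⁻¹' P) = c * ν P := by
    intro P
    have hS : S ∩ f ⁻¹' P = ⋃ b ∈ P, S ∩ f ⁻¹' {b} := by ext; simp
    rw [hS, measure_biUnion₀ P.to_countable ?_ fun b _ => (h b).1]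
    · simp_rw [(h _).2, ENNReal.tsum_mul_left, tsum_subtype P (fun b => ν {b}),
        ν.tsum_indicator_apply_singleton _ P.to_countable.measurableSet]
    · exact fun b _ b' _ hb => (((Set.disjoint_singleton.2 hb).preimage f).mono
        Set.inter_subset_right Set.inter_subset_right).aedisjoint
  have hS : NullMeasurableSet S μ := by
    simpa [← Set.inter_iUnion, ← Set.preimage_iUnion, Set.iUnion_of_singleton] using
      NullMeasurableSet.iUnion fun b => (h b).1
  have hμS : μ S = c := by simpa using hP Set.univ
  rw [ProbabilityTheory.cond, Measure.smul_apply, Measure.restrict_apply₀' hS, smul_eq_mul,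
    Set.inter_comm, hP, hμS, ENNReal.inv_mul_cancel_left hc0 hc]

namespace ABSG

section Deterministic

variable {x : ℕ → Bool}

lemma absgY_succ (x : ℕ → Bool) (i : ℕ) : absgY x (i + 1) = absgM (absgY x i) (x (i + 1)) :=
  rfl

lemma absgM_some_eq_none_iff {s b : Bool} : absgM (some s) b = none ↔ b = s := by
  cases s <;> cases b <;> simp [absgM]

lemma absgM_some_not (s : Bool) : absgM (some s) (!s) = some s := by
  cases s <;> rfl

lemma absgY_add_eq_some {a : ℕ} {s : Bool} (ha : absgY x a = some s) :
    ∀ r, (∀ i, 1 ≤ i → i ≤ r → x (a + i) = !s) → absgY x (a + r) = some s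
  | 0, _ => ha
  | r + 1, h => by
    rw [← add_assoc, absgY_succ, absgY_add_eq_some ha r fun i h1 h2 => h i h1 (by omega),
      add_assoc, h (r + 1) (by omega) le_rfl, absgM_some_not]

lemma eq_not_of_absgY_add_ne_none {a : ℕ} {s : Bool} (ha : absgY x a = some s) :
    ∀ r, (∀ i, 1 ≤ i → i ≤ r → absgY x (a + i) ≠ none) → ∀ i, 1 ≤ i → i ≤ r → x (a + i) = !s
  | 0, _, i, h1, h2 => by omega
  | r + 1, h, i, h1, h2 => by
    have ih := eq_not_of_absgY_add_ne_none ha r fun i h1 h2 => h i h1 (by omega)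
    rcases Nat.lt_or_ge i (r + 1) with hi | hi
    · exact ih i h1 (by omega)
    · obtain rfl : i = r + 1 := by omega
      have hr := h (r + 1) h1 le_rfl
      rw [← add_assoc, absgY_succ, absgY_add_eq_some ha r ih, ne_eq,
        absgM_some_eq_none_iff] at hr
      exact Bool.eq_not_iff.2 hr

lemma exists_forall_gt_eq_of_not_frequently (h : ¬∃ᶠ i in atTop, absgY x i = none) :
    ∃ n b, ∀ k, n < k → x k = b := by
  obtain ⟨n, hn⟩ := eventually_atTop.1 (not_frequently.1 h)
  obtain ⟨s, hs⟩ := Option.ne_none_iff_exists'.1 (hn n le_rfl)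
  refine ⟨n, !s, fun k hk => ?_⟩
  have := eq_not_of_absgY_add_ne_none hs (k - n) (fun i _ _ => hn _ (by omega)) (k - n)
    (by omega) le_rfl
  rwa [Nat.add_sub_cancel' hk.le] at this

noncomputable def nextReset (x : ℕ → Bool) (a : ℕ) : ℕ :=
  sInf {i | a < i ∧ absgY x i = none}

lemma absgH_succ (x : ℕ → Bool) (j : ℕ) : absgH x (j + 1) = nextReset x (absgH x j) :=
  rfl

lemma absgQ_succ (x : ℕ → Bool) (j : ℕ) :
    absgQ x (j + 1) = absgH x (j + 1) - absgH x j - 2 :=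
  rfl

/-- The outer bit `s` of the block `s (¬s)^m s` of gap `m` whose output bit is `z`. -/
def blockEdge (z : Bool) (m : ℕ) : Bool :=
  if m = 0 then z else !z

lemma blockEdge_blockEdge (z : Bool) (m : ℕ) : blockEdge (blockEdge z m) m = z := by
  unfold blockEdge
  split_ifs <;> simp

lemma absgZ_eq_blockEdge {j : ℕ} {s : Bool} (h : absgY x (absgH x j - 1) = some s) :
    absgZ x j = blockEdge s (absgQ x j) := by
  simp [absgZ, blockEdge, h]

def blockBit (z : Bool) (m r : ℕ) : Bool :=
  if r = 0 ∨ r = m + 1 then blockEdge z m else !blockEdge z m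

def IsBlock (x : ℕ → Bool) (a : ℕ) (z : Bool) (m : ℕ) : Prop :=
  ∀ r ≤ m + 1, x (a + 1 + r) = blockBit z m r

lemma nextReset_eq_of_isBlock {a m : ℕ} {z : Bool} (hx : IsBlock x a z m) (ha : absgY x a = none) :
    nextReset x a = a + m + 2 ∧ absgY x (a + m + 2) = none ∧
      absgY x (a + m + 1) = some (blockEdge z m) := by
  set s := blockEdge z m
  have h1 : absgY x (a + 1) = some s := by
    rw [absgY_succ, ha, ← add_zero (a + 1), hx 0 (by omega)]
    simp [blockBit, absgM, s]
  have hrun : ∀ r ≤ m, absgY x (a + 1 + r) = some s := fun r hr =>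
    absgY_add_eq_some h1 r fun i h1 h2 => by
      rw [hx i (by omega), blockBit, if_neg (by omega)]
  have hend : absgY x (a + m + 2) = none := by
    rw [show a + m + 2 = a + 1 + m + 1 by omega, absgY_succ, hrun m le_rfl,
      absgM_some_eq_none_iff, show a + 1 + m + 1 = a + 1 + (m + 1) by omega, hx (m + 1) le_rfl,
      blockBit, if_pos (by omega)]
  refine ⟨le_antisymm (Nat.sInf_le ⟨by omega, hend⟩) (le_csInf ⟨_, by omega, hend⟩ ?_), hend,
    by rw [add_right_comm]; exact hrun m le_rfl⟩
  rintro i ⟨hai, hi⟩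
  by_contra! hlt
  rw [show i = a + 1 + (i - a - 1) by omega, hrun _ (by omega)] at hi
  exact Option.some_ne_none _ hi

lemma isBlock_of_nextReset_eq {a m : ℕ} (ha : absgY x a = none)
    (hb : nextReset x a = a + m + 2) :
    IsBlock x a (blockEdge (x (a + 1)) m) m ∧ absgY x (a + m + 1) = some (x (a + 1)) := by
  set s := x (a + 1)
  have hne : {i | a < i ∧ absgY x i = none}.Nonempty :=
    Nat.nonempty_of_pos_sInf (by unfold nextReset at hb; omega)
  have hmem : a + m + 2 ∈ {i | a < i ∧ absgY x i = none} := hb ▸ Nat.sInf_mem hne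
  have h1 : absgY x (a + 1) = some s := by rw [absgY_succ, ha]; rfl
  have hmid : ∀ i, 1 ≤ i → i ≤ m → x (a + 1 + i) = !s :=
    eq_not_of_absgY_add_ne_none h1 m fun i _ _ hi =>
      Nat.notMem_of_lt_sInf (show a + 1 + i < nextReset x a by omega) ⟨by omega, hi⟩
  have hlast : absgY x (a + m + 1) = some s := by
    rw [add_right_comm]; exact absgY_add_eq_some h1 m hmid
  have hend : x (a + 1 + (m + 1)) = s := by
    have := hmem.2
    rwa [show a + m + 2 = a + m + 1 + 1 by omega, absgY_succ, hlast, absgM_some_eq_none_iff,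
      show a + m + 1 + 1 = a + 1 + (m + 1) by omega] at this
  refine ⟨fun r hr => ?_, hlast⟩
  rw [blockBit, blockEdge_blockEdge]
  split_ifs with hr'
  · rcases hr' with rfl | rfl
    · rfl
    · exact hend
  · exact hmid r (by omega) (by omega)

lemma nextReset_spec (hx : ∃ᶠ i in atTop, absgY x i = none) {a : ℕ} (ha : absgY x a = none) :
    a + 2 ≤ nextReset x a ∧ absgY x (nextReset x a) = none := by
  obtain ⟨b, hb, hbnone⟩ := frequently_atTop.1 hx (a + 1)
  have hmem : nextReset x a ∈ {i | a < i ∧ absgY x i = none} :=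
    Nat.sInf_mem ⟨b, by omega, hbnone⟩
  refine ⟨?_, hmem.2⟩
  by_contra! hlt
  have h1 : absgY x (a + 1) = some (x (a + 1)) := by rw [absgY_succ, ha]; rfl
  have := hmem.2
  rw [show nextReset x a = a + 1 by have := hmem.1; omega, h1] at this
  exact Option.some_ne_none _ this

lemma absgY_absgH (hx : ∃ᶠ i in atTop, absgY x i = none) : ∀ j, absgY x (absgH x j) = none
  | 0 => rfl
  | j + 1 => (nextReset_spec hx (absgY_absgH hx j)).2

lemma absgH_succ_eq_add (hx : ∃ᶠ i in atTop, absgY x i = none) (j : ℕ) :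
    absgH x (j + 1) = absgH x j + absgQ x (j + 1) + 2 := by
  have := (nextReset_spec hx (absgY_absgH hx j)).1
  rw [absgQ_succ, absgH_succ]
  omega

lemma isBlock_absgH (hx : ∃ᶠ i in atTop, absgY x i = none) (j : ℕ) :
    IsBlock x (absgH x j) (absgZ x (j + 1)) (absgQ x (j + 1)) := by
  obtain ⟨hblock, hlast⟩ := isBlock_of_nextReset_eq (absgY_absgH hx j) (absgH_succ_eq_add hx j)
  rwa [absgZ_eq_blockEdge (s := x (absgH x j + 1))]
  rwa [absgH_succ_eq_add hx j]

def blockEnd (q : ℕ → ℕ) (j : ℕ) : ℕ :=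
  ∑ i ∈ Finset.range j, (q (i + 1) + 2)

lemma blockEnd_succ (q : ℕ → ℕ) (j : ℕ) : blockEnd q (j + 1) = blockEnd q j + q (j + 1) + 2 :=
  Finset.sum_range_succ _ _

lemma blockEnd_congr {q q' : ℕ → ℕ} {j : ℕ} (h : ∀ i < j, q (i + 1) = q' (i + 1)) :
    blockEnd q j = blockEnd q' j :=
  Finset.sum_congr rfl fun i hi => by rw [h i (Finset.mem_range.1 hi)]

lemma absgH_eq_blockEnd (hx : ∃ᶠ i in atTop, absgY x i = none) :
    ∀ j, absgH x j = blockEnd (absgQ x) j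
  | 0 => rfl
  | j + 1 => by rw [absgH_succ_eq_add hx, blockEnd_succ, absgH_eq_blockEnd hx j]

variable {N : ℕ} {z : ℕ → Bool} {q : ℕ → ℕ}

lemma absgH_of_isBlock (h : ∀ j < N, IsBlock x (blockEnd q j) (z (j + 1)) (q (j + 1))) :
    ∀ j ≤ N, absgH x j = blockEnd q j ∧ absgY x (blockEnd q j) = none
  | 0, _ => ⟨rfl, rfl⟩
  | j + 1, hj => by
    obtain ⟨hH, hY⟩ := absgH_of_isBlock h j (by omega)
    obtain ⟨hnext, hnone, -⟩ := nextReset_eq_of_isBlock (h j (by omega)) hY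
    rw [absgH_succ, hH, hnext, blockEnd_succ]
    exact ⟨rfl, hnone⟩

lemma absgZ_absgQ_of_isBlock (h : ∀ j < N, IsBlock x (blockEnd q j) (z (j + 1)) (q (j + 1)))
    {j : ℕ} (hj : j < N) : absgZ x (j + 1) = z (j + 1) ∧ absgQ x (j + 1) = q (j + 1) := by
  obtain ⟨hH, hY⟩ := absgH_of_isBlock h j hj.le
  obtain ⟨hH', -⟩ := absgH_of_isBlock h (j + 1) hj
  obtain ⟨-, -, hlast⟩ := nextReset_eq_of_isBlock (h j hj) hY
  have hQ : absgQ x (j + 1) = q (j + 1) := by rw [absgQ_succ, hH, hH', blockEnd_succ]; omega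
  refine ⟨?_, hQ⟩
  rw [absgZ_eq_blockEdge (s := blockEdge (z (j + 1)) (q (j + 1))), hQ, blockEdge_blockEdge]
  rwa [hH', blockEnd_succ]

theorem forall_absgZ_absgQ_iff (hx : ∃ᶠ i in atTop, absgY x i = none) :
    (∀ j < N, absgZ x (j + 1) = z (j + 1) ∧ absgQ x (j + 1) = q (j + 1)) ↔
      ∀ j < N, IsBlock x (blockEnd q j) (z (j + 1)) (q (j + 1)) := by
  refine ⟨fun h j hj => ?_, fun h j hj => absgZ_absgQ_of_isBlock h hj⟩
  have hend : blockEnd q j = absgH x j := by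
    rw [absgH_eq_blockEnd hx]
    exact blockEnd_congr fun i hi => ((h i (by omega)).2).symm
  rw [hend, ← (h j hj).1, ← (h j hj).2]
  exact isBlock_absgH hx j

def blockWord (z : ℕ → Bool) (q : ℕ → ℕ) : ℕ → ℕ → Bool
  | 0, _ => false
  | N + 1, k =>
    if k ≤ blockEnd q N then blockWord z q N k
    else blockBit (z (N + 1)) (q (N + 1)) (k - blockEnd q N - 1)

lemma forall_isBlock_iff_blockWord :
    (∀ j < N, IsBlock x (blockEnd q j) (z (j + 1)) (q (j + 1))) ↔
      ∀ k ∈ Finset.Icc 1 (blockEnd q N), x k = blockWord z q N k := by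
  induction N with
  | zero => simp [blockEnd]
  | succ N ih =>
    rw [Nat.forall_lt_succ_right, ih]
    constructor
    · rintro ⟨hw, hb⟩ k hk
      rw [Finset.mem_Icc, blockEnd_succ] at hk
      rw [blockWord]
      split_ifs with hkN
      · exact hw k (Finset.mem_Icc.2 ⟨hk.1, hkN⟩)
      · have := hb (k - blockEnd q N - 1) (by omega)
        rwa [show blockEnd q N + 1 + (k - blockEnd q N - 1) = k by omega] at this
    · intro hw
      refine ⟨fun k hk => ?_, fun r hr => ?_⟩
      · rw [Finset.mem_Icc] at hk
        rw [hw k (Finset.mem_Icc.2 ⟨hk.1, by rw [blockEnd_succ]; omega⟩), blockWord,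
          if_pos hk.2]
      · rw [hw _ (Finset.mem_Icc.2 ⟨by omega, by rw [blockEnd_succ]; omega⟩), blockWord,
          if_neg (by omega)]
        congr 1
        omega

end Deterministic

lemma half_pow_blockEnd (q : ℕ → ℕ) (N : ℕ) :
    (1 / 2 : ℝ≥0∞) ^ blockEnd q N = (1 / 2) ^ N * ∏ i : Fin N, (1 / 2) ^ (q (i + 1) + 1) := by
  rw [Fin.prod_univ_eq_prod_range (fun i => (1 / 2 : ℝ≥0∞) ^ (q (i + 1) + 1)),
    Finset.prod_pow_eq_pow_sum, ← pow_add, blockEnd]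
  congr 1
  simp [Finset.sum_add_distrib]
  ring

noncomputable abbrev geometricHalf : Measure ℕ :=
  geometricMeasure ⟨1 / 2, by norm_num, by norm_num⟩

lemma geometricHalf_singleton (n : ℕ) : geometricHalf {n} = (1 / 2) ^ (n + 1) := by
  rw [geometricMeasure_singleton (by simp [← Subtype.coe_ne_coe])]
  norm_num [← pow_succ, ENNReal.ofReal_pow]
  rw [one_div, ENNReal.ofReal_inv_of_pos two_pos, ENNReal.ofReal_ofNat]

section Probability

variable {Ω : Type*} [MeasurableSpace Ω] {μ : Measure Ω} {X : ℕ → Ω → Bool}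

lemma measure_forall_mem_eq_half_pow (hindep : iIndepFun X μ)
    (hunif : ∀ i b, μ {ω | X i ω = b} = 1 / 2) (K : Finset ℕ) (w : ℕ → Bool) :
    μ {ω | ∀ k ∈ K, X k ω = w k} = (1 / 2) ^ K.card := by
  have : {ω | ∀ k ∈ K, X k ω = w k} = ⋂ k ∈ K, {ω | X k ω = w k} := by ext; simp
  rw [this, hindep.meas_biInter (s := fun k => {ω | X k ω = w k})
      fun k _ => ⟨{w k}, trivial, rfl⟩, Finset.prod_congr rfl fun k _ => hunif k (w k),
    Finset.prod_const]

lemma measure_forall_gt_eq_zero (hindep : iIndepFun X μ)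
    (hunif : ∀ i b, μ {ω | X i ω = b} = 1 / 2) (n : ℕ) (b : Bool) :
    μ {ω | ∀ k, n < k → X k ω = b} = 0 := by
  refine le_antisymm (ge_of_tendsto' (ENNReal.tendsto_pow_atTop_nhds_zero_of_lt_one
    (by norm_num : (1 / 2 : ℝ≥0∞) < 1)) fun m => ?_) zero_le
  calc μ {ω | ∀ k, n < k → X k ω = b}
      ≤ μ {ω | ∀ k ∈ Finset.Ioc n (n + m), X k ω = b} :=
        measure_mono fun ω hω k hk => hω k (Finset.mem_Ioc.1 hk).1
    _ = (1 / 2) ^ m := by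
        rw [measure_forall_mem_eq_half_pow hindep hunif _ fun _ => b, Nat.card_Ioc,
          Nat.add_sub_cancel_left]

lemma ae_frequently_absgY_eq_none (hindep : iIndepFun X μ)
    (hunif : ∀ i b, μ {ω | X i ω = b} = 1 / 2) :
    ∀ᵐ ω ∂μ, ∃ᶠ i in atTop, absgY (fun k => X k ω) i = none := by
  rw [ae_iff]
  refine measure_mono_null (fun ω hω => ?_)
    (measure_iUnion_null fun p : ℕ × Bool => measure_forall_gt_eq_zero hindep hunif p.1 p.2)
  obtain ⟨n, b, h⟩ := exists_forall_gt_eq_of_not_frequently hω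
  exact Set.mem_iUnion.2 ⟨(n, b), h⟩

lemma absgZ_absgQ_ae_eq_blockWord (hindep : iIndepFun X μ)
    (hunif : ∀ i b, μ {ω | X i ω = b} = 1 / 2) (N : ℕ) (z : ℕ → Bool) (q : ℕ → ℕ) :
    ({ω | ∀ j, 1 ≤ j → j ≤ N → absgZ (fun k => X k ω) j = z j} ∩
        {ω | ∀ j, 1 ≤ j → j ≤ N → absgQ (fun k => X k ω) j = q j} : Set Ω) =ᵐ[μ]
      {ω | ∀ k ∈ Finset.Icc 1 (blockEnd q N), X k ω = blockWord z q N k} := by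
  refine Eventually.set_eq ?_
  filter_upwards [ae_frequently_absgY_eq_none hindep hunif] with ω hω
  simp only [Set.mem_inter_iff, Set.mem_ofPred_eq, forall_Icc_iff_forall_lt, ← forall_and]
  exact (forall_absgZ_absgQ_iff hω).trans forall_isBlock_iff_blockWord

lemma measure_of_ae_eq_blockWord (hmeas : ∀ i, Measurable (X i)) (hindep : iIndepFun X μ)
    (hunif : ∀ i b, μ {ω | X i ω = b} = 1 / 2) {N : ℕ} {z : ℕ → Bool} {q : ℕ → ℕ} {E : Set Ω}
    (hE : E =ᵐ[μ] {ω | ∀ k ∈ Finset.Icc 1 (blockEnd q N), X k ω = blockWord z q N k}) :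
    NullMeasurableSet E μ ∧ μ E = (1 / 2) ^ N * ∏ i : Fin N, (1 / 2) ^ (q (i + 1) + 1) := by
  have hcyl : MeasurableSet
      {ω | ∀ k ∈ Finset.Icc 1 (blockEnd q N), X k ω = blockWord z q N k} := by
    simp only [Set.ofPred_forall]
    exact .iInter fun k => .iInter fun _ => hmeas k (measurableSet_singleton _)
  refine ⟨hcyl.nullMeasurableSet.congr hE.symm, ?_⟩
  rw [measure_congr hE, measure_forall_mem_eq_half_pow hindep hunif, Nat.card_Icc,
    Nat.add_sub_cancel, half_pow_blockEnd]

theorem cond_absgQ_eq_pi (hmeas : ∀ i, Measurable (X i)) (hindep : iIndepFun X μ)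
    (hunif : ∀ i b, μ {ω | X i ω = b} = 1 / 2) (N : ℕ) (z : ℕ → Bool)
    (P : Set (Fin N → ℕ)) :
    μ[(fun ω (i : Fin N) => absgQ (fun k => X k ω) (i + 1)) ⁻¹' P |
        {ω | ∀ j, 1 ≤ j → j ≤ N → absgZ (fun k => X k ω) j = z j}] =
      Measure.pi (fun _ => geometricHalf) P := by
  refine cond_preimage_eq_of_forall_singleton (c := (1 / 2) ^ N) (by simp) (by simp)
    (fun v => ?_) P
  obtain ⟨q, rfl⟩ : ∃ q : ℕ → ℕ, (fun i : Fin N => q (i + 1)) = v :=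
    ⟨Function.extend (fun i : Fin N => (i : ℕ) + 1) v 0,
      funext (((add_left_injective 1).comp Fin.val_injective).extend_apply v 0)⟩
  rw [← setOf_forall_Icc_eq_preimage, Measure.pi_singleton]
  simpa only [geometricHalf_singleton] using
    measure_of_ae_eq_blockWord hmeas hindep hunif (absgZ_absgQ_ae_eq_blockWord hindep hunif N z q)

end Probability

end ABSG

open ABSG

theorem stmt_0_general
    {Ω : Type*} [MeasurableSpace Ω] (μ : Measure Ω)
    (X : ℕ → Ω → Bool)
    (hmeas : ∀ i, Measurable (X i))
    (hindep : iIndepFun X μ)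
    (hunif : ∀ i b, μ {ω | X i ω = b} = 1 / 2) :
    ∀ N : ℕ, 1 ≤ N → ∀ z : ℕ → Bool,
      0 < μ {ω | ∀ j, 1 ≤ j → j ≤ N → absgZ (fun k => X k ω) j = z j} →
      (∀ q : ℕ → ℕ,
        (μ[|{ω | ∀ j, 1 ≤ j → j ≤ N → absgZ (fun k => X k ω) j = z j}])
            {ω | ∀ i, 1 ≤ i → i ≤ N → absgQ (fun k => X k ω) i = q i}
          = ∏ i ∈ Finset.Icc 1 N, (1 / 2 : ℝ≥0∞) ^ (q i + 1)) ∧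
      (∀ i, 1 ≤ i → i ≤ N → ∀ qv : ℕ,
        (μ[|{ω | ∀ j, 1 ≤ j → j ≤ N → absgZ (fun k => X k ω) j = z j}])
            {ω | absgQ (fun k => X k ω) i = qv}
          = (1 / 2 : ℝ≥0∞) ^ (qv + 1)) := by
  intro N _ z _
  refine ⟨fun q => ?_, fun i hi hiN qv => ?_⟩
  · rw [setOf_forall_Icc_eq_preimage (fun ω => absgQ (fun k => X k ω)),
      cond_absgQ_eq_pi hmeas hindep hunif,
      Measure.pi_singleton, prod_Icc_one_eq_prod_fin]
    simp only [geometricHalf_singleton]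
  · have : {ω | absgQ (fun k => X k ω) i = qv} =
        (fun ω (i : Fin N) => absgQ (fun k => X k ω) (i + 1)) ⁻¹'
          (Function.eval ⟨i - 1, by omega⟩ ⁻¹' {qv}) := by
      ext ω
      simp [Nat.sub_add_cancel hi]
    rw [this, cond_absgQ_eq_pi hmeas hindep hunif, (measurePreserving_eval _ _).measure_preimage
      (measurableSet_singleton _).nullMeasurableSet, geometricHalf_singleton]

/-- **Lemma 1 of the paper.** If `(X n)_{n≥1}` are i.i.d. uniform bits
driving the ABSG algorithm, then for every `N ≥ 1` and every output string
`z 1, …, z N` of positive probability, conditionally on `Z_1^N = z_1^N` the gap variables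
`Q 1, …, Q N` are i.i.d. geometric(1/2):
`P(Q_1 = q_1, …, Q_N = q_N | Z_1^N = z_1^N) = ∏_{i=1}^N (1/2)^{q_i+1}` and
`P(Q_i = q | Z_1^N = z_1^N) = (1/2)^{q+1}` for each `1 ≤ i ≤ N`. -/
theorem stmt_0
    {Ω : Type*} [MeasurableSpace Ω] (μ : Measure Ω) [IsProbabilityMeasure μ]
    (X : ℕ → Ω → Bool)
    (hmeas : ∀ i, Measurable (X i))
    (hindep : iIndepFun X μ)
    (hunif : ∀ i b, μ {ω | X i ω = b} = 1 / 2) :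
    ∀ N : ℕ, 1 ≤ N → ∀ z : ℕ → Bool,
      0 < μ {ω | ∀ j, 1 ≤ j → j ≤ N → absgZ (fun k => X k ω) j = z j} →
      (∀ q : ℕ → ℕ,
        (μ[|{ω | ∀ j, 1 ≤ j → j ≤ N → absgZ (fun k => X k ω) j = z j}])
            {ω | ∀ i, 1 ≤ i → i ≤ N → absgQ (fun k => X k ω) i = q i}
          = ∏ i ∈ Finset.Icc 1 N, (1 / 2 : ℝ≥0∞) ^ (q i + 1)) ∧
      (∀ i, 1 ≤ i → i ≤ N → ∀ qv : ℕ,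
        (μ[|{ω | ∀ j, 1 ≤ j → j ≤ N → absgZ (fun k => X k ω) j = z j}])
            {ω | absgQ (fun k => X k ω) i = qv}
          = (1 / 2 : ℝ≥0∞) ^ (qv + 1)) :=
  stmt_0_general μ X hmeas hindep hunif
end

section
/- (Converse, general case.) Let L be a positive integer and let (Q_i)_{i≥1} be independent identically distributed random variables taking values in ℕ with P(Q_i = q) = (1/2)^{q+1}. Let G_1, …, G_K be guesses, where G_k = (i_k, θ_k, q^{(k)}) with i_k ≥ 1, θ_k ≥ 1, q^{(k)} ∈ ℕ^{θ_k} and 2θ_k + Σ_{j=1}^{θ_k} q^{(k)}_j ≥ L for every k. If the success probability P( ∃ k ∈ {1,…,K} : Q_{i_k + j − 1} = q^{(k)}_j for all 1 ≤ j ≤ θ_k ) > 1/2, then K > 2^{L/2 − 1}. -/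
open MeasureTheory ProbabilityTheory ENNReal

/-!
Each single guess `(i, θ, q)` succeeds with probability `∏ⱼ 2^{-(q_j+1)} = 2^{-(θ + Σ q_j)}`,
and validity forces `θ + Σ q_j ≥ L/2`. By the union bound `K` guesses succeed with probability
at most `K · 2^{-⌈L/2⌉}`, which exceeds `1/2` only if `K > 2^{L/2 - 1}`.
-/

theorem ProbabilityTheory.iIndepFun.measure_forall_lt_add_eq {Ω β : Type*} [MeasurableSpace Ω]
    [MeasurableSpace β] [MeasurableSingletonClass β] {μ : Measure Ω} {X : ℕ → Ω → β} (hX : iIndepFun X μ)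
    (a θ : ℕ) (x : ℕ → β) :
    μ {ω | ∀ j < θ, X (a + j) ω = x j} = ∏ j ∈ Finset.range θ, μ {ω | X (a + j) ω = x j} := by
  have hshift : iIndepFun (fun j ↦ X (a + j)) μ := hX.precomp (add_right_injective a)
  have hset : {ω | ∀ j < θ, X (a + j) ω = x j} = ⋂ j ∈ Finset.range θ, X (a + j) ⁻¹' {x j} := by
    ext ω; simp
  rw [hset, hshift.measure_inter_preimage_eq_mul _ fun j _ ↦ measurableSet_singleton (x j)]
  rfl

theorem measure_forall_lt_add_eq_of_geometric {Ω : Type*} [MeasurableSpace Ω] {μ : Measure Ω}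
    {Q : ℕ → Ω → ℕ} (hindep : iIndepFun Q μ)
    (hpmf : ∀ i q, μ {ω | Q i ω = q} = (1 / 2 : ℝ≥0∞) ^ (q + 1)) (a θ : ℕ) (q : ℕ → ℕ) :
    μ {ω | ∀ j < θ, Q (a + j) ω = q j} = (1 / 2 : ℝ≥0∞) ^ (θ + ∑ j ∈ Finset.range θ, q j) := by
  simp only [hindep.measure_forall_lt_add_eq, hpmf, Finset.prod_pow_eq_pow_sum,
    Finset.sum_add_distrib, Finset.sum_const, Finset.card_range, smul_eq_mul, mul_one, add_comm]

theorem two_pow_lt_two_mul_of_half_lt {K n : ℕ}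
    (h : (1 / 2 : ℝ≥0∞) < K * (1 / 2) ^ n) : 2 ^ n < 2 * K := by
  rw [one_div, ← ENNReal.inv_pow, ← div_eq_mul_inv,
    ENNReal.lt_div_iff_mul_lt (by simp) (by simp), mul_comm, ← div_eq_mul_inv,
    ENNReal.div_lt_iff (by simp) (by simp), mul_comm] at h
  exact_mod_cast h

theorem two_rpow_half_sub_one_lt {L n K : ℕ} (hL : L ≤ 2 * n) (h : 2 ^ n < 2 * K) :
    (2 : ℝ) ^ ((L : ℝ) / 2 - 1) < K := by
  have hK : (2 : ℝ) ^ n < 2 * K := by exact_mod_cast h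
  have hLn : (L : ℝ) / 2 - 1 ≤ n - 1 := by
    have : (L : ℝ) ≤ 2 * n := by exact_mod_cast hL
    linarith
  calc (2 : ℝ) ^ ((L : ℝ) / 2 - 1) ≤ 2 ^ ((n : ℝ) - 1) := by gcongr; norm_num
    _ = 2 ^ n / 2 := by rw [Real.rpow_sub_one two_ne_zero, Real.rpow_natCast]
    _ < K := by linarith

theorem stmt_5_general
    {Ω : Type*} [MeasurableSpace Ω] (μ : Measure Ω)
    (Q : ℕ → Ω → ℕ)
    (hindep : iIndepFun Q μ)
    (hpmf : ∀ i q, μ {ω | Q i ω = q} = (1 / 2 : ℝ≥0∞) ^ (q + 1))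
    (L : ℕ)
    (K : ℕ) (idx θ : ℕ → ℕ) (q : ℕ → ℕ → ℕ)
    (hvalid : ∀ k < K, L ≤ 2 * θ k + ∑ j ∈ Finset.range (θ k), q k j)
    (hsucc : (1 / 2 : ℝ≥0∞)
        < μ {ω | ∃ k < K, ∀ j < θ k, Q (idx k + j) ω = q k j}) :
    (2 : ℝ) ^ ((L : ℝ) / 2 - 1) < (K : ℝ) := by
  set n := (L + 1) / 2
  have hguess : ∀ k ∈ Finset.range K,
      μ {ω | ∀ j < θ k, Q (idx k + j) ω = q k j} ≤ (1 / 2 : ℝ≥0∞) ^ n := by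
    intro k hk
    have := hvalid k (Finset.mem_range.mp hk)
    rw [measure_forall_lt_add_eq_of_geometric hindep hpmf]
    exact pow_le_pow_of_le_one (by norm_num) (by norm_num) (by omega)
  have hunion : (1 / 2 : ℝ≥0∞) < K * (1 / 2) ^ n := calc
    _ < μ {ω | ∃ k < K, ∀ j < θ k, Q (idx k + j) ω = q k j} := hsucc
    _ = μ (⋃ k ∈ Finset.range K, {ω | ∀ j < θ k, Q (idx k + j) ω = q k j}) := by
      congr 1; ext; simp
    _ ≤ ∑ k ∈ Finset.range K, μ {ω | ∀ j < θ k, Q (idx k + j) ω = q k j} :=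
      measure_biUnion_finset_le _ _
    _ ≤ ∑ _k ∈ Finset.range K, (1 / 2 : ℝ≥0∞) ^ n := Finset.sum_le_sum hguess
    _ = K * (1 / 2) ^ n := by simp
  exact two_rpow_half_sub_one_lt (by omega) (two_pow_lt_two_mul_of_half_lt hunion)

/-- **Converse, general case.** If `K` valid ABSG guesses
`G_k = (i_k, θ_k, q^{(k)})` (with `i_k ≥ 1`, `θ_k ≥ 1`, `2θ_k + Σ_j q^{(k)}_j ≥ L`)
against i.i.d. geometric(1/2) variables `(Q i)` have overall success probability
exceeding 1/2, then `K > 2^{L/2 − 1}`. -/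
theorem stmt_5
    {Ω : Type*} [MeasurableSpace Ω] (μ : Measure Ω) [IsProbabilityMeasure μ]
    (Q : ℕ → Ω → ℕ)
    (hmeas : ∀ i, Measurable (Q i))
    (hindep : iIndepFun Q μ)
    (hpmf : ∀ i q, μ {ω | Q i ω = q} = (1 / 2 : ℝ≥0∞) ^ (q + 1))
    (L : ℕ) (hL : 1 ≤ L)
    (K : ℕ) (idx θ : ℕ → ℕ) (q : ℕ → ℕ → ℕ)
    (hidx : ∀ k < K, 1 ≤ idx k) (hθ : ∀ k < K, 1 ≤ θ k)
    (hvalid : ∀ k < K, L ≤ 2 * θ k + ∑ j ∈ Finset.range (θ k), q k j)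
    (hsucc : (1 / 2 : ℝ≥0∞)
        < μ {ω | ∃ k < K, ∀ j < θ k, Q (idx k + j) ω = q k j}) :
    (2 : ℝ) ^ ((L : ℝ) / 2 - 1) < (K : ℝ) :=
  stmt_5_general μ Q hindep hpmf L K idx θ q hvalid hsucc
end

section
/- (Achievability, exhaustive search.) Let (Q_i)_{i≥1} be independent identically distributed random variables taking values in ℕ with P(Q_i = q) = (1/2)^{q+1}. For every ε ∈ (0,1) there exists n₀ such that for all n ≥ n₀ there exists a finite set S ⊆ ℕ^n satisfying: (i) |S| ≤ 2^{n(2+ε)}; (ii) P( (Q_1,…,Q_n) ∈ S ) > 1 − ε; and (iii) every q ∈ S satisfies n(1−ε) ≤ Σ_{i=1}^n q_i ≤ n(1+ε), so that with L = 3n every guess (1, n, q), q ∈ S, satisfies 2n + Σ_{i=1}^n q_i ≥ L(1 − ε/3). -/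
/-!
The averages `(Q₁ + ⋯ + Qₙ) / n` converge in probability to `𝔼 Q = 1` (the weak law, obtained
from the strong law), so with probability `> 1 - ε` the tuple `(Q₁, …, Qₙ)` has sum in
`[n(1 - ε), n(1 + ε)]`; `S` is the set of all such tuples. To count them, give `q` the weight
`∏ 2^{-(qᵢ+1)} = 2^{-(∑ qᵢ + n)}`: these weights sum to at most `1` over all of `ℕⁿ`, and each is at
least `2^{-(m + n)}` when `∑ qᵢ ≤ m = ⌊n(1 + ε)⌋`, so `|S| ≤ 2^{m+n} ≤ 2^{n(2+ε)}`.
-/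

open MeasureTheory ProbabilityTheory ENNReal Finset Filter Function

theorem Finset.card_le_two_pow_of_sum_le {ι : Type*} [Fintype ι] {T : Finset (ι → ℕ)} {m : ℕ}
    (hT : ∀ q ∈ T, ∑ i, q i ≤ m) : T.card ≤ 2 ^ (m + Fintype.card ι) := by
  classical
  have hsub : T ⊆ Fintype.piFinset fun _ => range (m + 1) := fun q hq =>
    Fintype.mem_piFinset.2 fun i => mem_range.2 <| Nat.lt_succ_of_le <|
      (single_le_sum (fun _ _ => Nat.zero_le _) (mem_univ i)).trans (hT q hq)
  have hweight : ∀ q ∈ T, (1 / 2 : ℝ) ^ (m + Fintype.card ι) ≤ ∏ i, (1 / 2 : ℝ) ^ (q i + 1) := by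
    intro q hq
    rw [prod_pow_eq_pow_sum, sum_add_distrib, sum_const, card_univ, smul_eq_mul, mul_one]
    exact pow_le_pow_of_le_one (by norm_num) (by norm_num) (Nat.add_le_add_right (hT q hq) _)
  have hgeom : ∑ k ∈ range (m + 1), (1 / 2 : ℝ) ^ (k + 1) ≤ 1 := by
    simp_rw [pow_succ, ← sum_mul]
    linarith [sum_geometric_two_le (m + 1)]
  have htotal : ∑ q ∈ Fintype.piFinset (fun _ : ι => range (m + 1)),
      ∏ i, (1 / 2 : ℝ) ^ (q i + 1) ≤ 1 := by
    rw [← prod_univ_sum (fun _ => range (m + 1)) fun _ k => (1 / 2 : ℝ) ^ (k + 1)]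
    exact prod_le_one (fun _ _ => by positivity) fun _ _ => hgeom
  have hmass : (T.card : ℝ) * (1 / 2) ^ (m + Fintype.card ι) ≤ 1 :=
    calc (T.card : ℝ) * (1 / 2) ^ (m + Fintype.card ι)
        = ∑ _q ∈ T, (1 / 2 : ℝ) ^ (m + Fintype.card ι) := by rw [sum_const, nsmul_eq_mul]
      _ ≤ ∑ q ∈ T, ∏ i, (1 / 2 : ℝ) ^ (q i + 1) := sum_le_sum hweight
      _ ≤ ∑ q ∈ Fintype.piFinset (fun _ : ι => range (m + 1)), ∏ i, (1 / 2 : ℝ) ^ (q i + 1) :=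
          sum_le_sum_of_subset_of_nonneg hsub fun _ _ _ => by positivity
      _ ≤ 1 := htotal
  rw [one_div_pow, mul_one_div, div_le_one (by positivity)] at hmass
  exact_mod_cast hmass

lemma unitInterval.norm_one_sub_lt_one {p : unitInterval} (hp : p ≠ 0) : ‖(1 - p : ℝ)‖ < 1 := by
  have : (0 : ℝ) < p := p.2.1.lt_of_ne' (unitInterval.coe_ne_zero.2 hp)
  rw [Real.norm_eq_abs, abs_lt]
  constructor <;> linarith [p.2.2]

namespace ProbabilityTheory

variable {Ω : Type*} [MeasurableSpace Ω] {μ : Measure Ω} {p : unitInterval}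

lemma integrable_natCast_geometricMeasure (hp : p ≠ 0) :
    Integrable (fun n : ℕ => (n : ℝ)) (geometricMeasure p) := by
  have hr := unitInterval.norm_one_sub_lt_one hp
  rw [integrable_geometricMeasure_iff hp]
  simpa [mul_comm, mul_assoc, mul_left_comm] using
    (summable_pow_mul_geometric_of_norm_lt_one 1 hr).mul_left (p : ℝ)

lemma integral_natCast_geometricMeasure (hp : p ≠ 0) :
    ∫ n, (n : ℝ) ∂geometricMeasure p = (1 - p) / p := by
  have hr := unitInterval.norm_one_sub_lt_one hp
  rw [integral_geometricMeasure hp]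
  have hp' : (p : ℝ) ≠ 0 := unitInterval.coe_ne_zero.2 hp
  calc ∑' n : ℕ, ((1 - p : ℝ) ^ n * p) • (n : ℝ) = p * ∑' n : ℕ, (n : ℝ) * (1 - p) ^ n := by
        rw [← tsum_mul_left]; congr with n; rw [smul_eq_mul]; ring
    _ = (1 - p) / p := by
        rw [tsum_coe_mul_geometric_of_norm_lt_one hr, _root_.sub_sub_cancel]; field_simp

lemma map_eq_geometricMeasure (hp : p ≠ 0) {X : Ω → ℕ} (hX : Measurable X)
    (hpmf : ∀ q, μ {ω | X ω = q} = ENNReal.ofReal ((1 - p) ^ q * p)) :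
    μ.map X = geometricMeasure p :=
  Measure.ext_of_singleton fun q => by
    rw [Measure.map_apply hX (measurableSet_singleton q), geometricMeasure_singleton hp, ← hpmf]
    rfl

theorem tendstoInMeasure_average [IsProbabilityMeasure μ] {X : ℕ → Ω → ℝ}
    (hint : Integrable (X 0) μ) (hindep : Pairwise ((· ⟂ᵢ[μ] ·) on X))
    (hident : ∀ i, IdentDistrib (X i) (X 0) μ μ) :
    TendstoInMeasure μ (fun (n : ℕ) ω => (n : ℝ)⁻¹ • ∑ i ∈ range n, X i ω) atTop fun _ => μ[X 0] :=
  tendstoInMeasure_of_tendsto_ae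
    (fun n => ((integrable_finsetSum (range n) fun i _ =>
      (hident i).integrable_iff.2 hint).aestronglyMeasurable.const_smul (n : ℝ)⁻¹ :))
    (strong_law_ae X hint hindep hident)

end ProbabilityTheory

lemma MeasureTheory.ofReal_one_sub_lt_measure_compl {Ω : Type*} [MeasurableSpace Ω] {μ : Measure Ω}
    [IsProbabilityMeasure μ] {s : Set Ω} {ε : ℝ} (hε : ε ≤ 1) (hs : μ s < ENNReal.ofReal ε) :
    ENNReal.ofReal (1 - ε) < μ sᶜ := by
  have hε₀ : 0 < ε := ENNReal.ofReal_pos.1 (zero_le.trans_lt hs)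
  by_contra! hle
  have := calc (1 : ℝ≥0∞) = μ Set.univ := measure_univ.symm
    _ ≤ μ s + μ sᶜ := measure_univ_le_add_compl s
    _ < ENNReal.ofReal ε + ENNReal.ofReal (1 - ε) := ENNReal.add_lt_add_of_lt_of_le (by simp) hs hle
    _ = 1 := by rw [← ENNReal.ofReal_add (by linarith) (by linarith)]; simp
  exact this.false

lemma exists_finset_of_measure_dist_average_lt {Ω : Type*} [MeasurableSpace Ω] {μ : Measure Ω}
    [IsProbabilityMeasure μ] {n : ℕ} (hn : 0 < n) {ε : ℝ} (hε : ε < 1) (Y : Ω → Fin n → ℕ)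
    (hY : μ {ω | ε ≤ dist ((n : ℝ)⁻¹ * ∑ i, (Y ω i : ℝ)) 1} < ENNReal.ofReal ε) :
    ∃ S : Finset (Fin n → ℕ), (S.card : ℝ) ≤ 2 ^ ((n : ℝ) * (2 + ε)) ∧
      ENNReal.ofReal (1 - ε) < μ {ω | Y ω ∈ S} ∧
      ∀ q ∈ S, (n : ℝ) * (1 - ε) ≤ ∑ i, (q i : ℝ) ∧ ∑ i, (q i : ℝ) ≤ n * (1 + ε) := by
  have hε₀ : 0 < ε := ENNReal.ofReal_pos.1 (zero_le.trans_lt hY)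
  set m := ⌊(n : ℝ) * (1 + ε)⌋₊
  set S := (Fintype.piFinset fun _ : Fin n => range (m + 1)).filter
    fun q => (n : ℝ) * (1 - ε) ≤ ∑ i, (q i : ℝ) ∧ ∑ i, (q i : ℝ) ≤ n * (1 + ε)
  have hmem : ∀ q, q ∈ S ↔ (n : ℝ) * (1 - ε) ≤ ∑ i, (q i : ℝ) ∧ ∑ i, (q i : ℝ) ≤ n * (1 + ε) := by
    refine fun q => ⟨fun hq => (mem_filter.1 hq).2, fun hq => mem_filter.2 ⟨?_, hq⟩⟩
    refine Fintype.mem_piFinset.2 fun i => mem_range.2 (Nat.lt_succ_of_le (Nat.le_floor ?_))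
    exact (single_le_sum (fun j _ => Nat.cast_nonneg (q j)) (mem_univ i)).trans hq.2
  refine ⟨S, ?_, ?_, fun q hq => (hmem q).1 hq⟩
  · have hcard : S.card ≤ 2 ^ (m + n) := by
      simpa using card_le_two_pow_of_sum_le (T := S) fun q hq =>
        Nat.le_floor (by exact_mod_cast ((hmem q).1 hq).2)
    have hm : (m : ℝ) ≤ n * (1 + ε) := Nat.floor_le (by positivity)
    calc (S.card : ℝ) ≤ (2 : ℝ) ^ ((m + n : ℕ) : ℝ) := by
          rw [Real.rpow_natCast]; exact_mod_cast hcard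
      _ ≤ 2 ^ ((n : ℝ) * (2 + ε)) :=
          Real.rpow_le_rpow_of_exponent_le one_le_two (by push_cast; linarith)
  · refine (ofReal_one_sub_lt_measure_compl hε.le hY).trans_le (measure_mono fun ω hω => ?_)
    have hnR : (0 : ℝ) < n := by exact_mod_cast hn
    simp only [Set.mem_compl_iff, Set.mem_ofPred_eq, not_le, Real.dist_eq, abs_lt] at hω
    rw [Set.mem_ofPred_eq, hmem]
    have hsum : ∑ i, (Y ω i : ℝ) = n * ((n : ℝ)⁻¹ * ∑ i, (Y ω i : ℝ)) := by field_simp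
    rw [hsum]
    exact ⟨mul_le_mul_of_nonneg_left (by linarith) hnR.le,
      mul_le_mul_of_nonneg_left (by linarith) hnR.le⟩

theorem tendstoInMeasure_average_of_measure_eq_half_pow {Ω : Type*} [MeasurableSpace Ω]
    {μ : Measure Ω} [IsProbabilityMeasure μ] {Q : ℕ → Ω → ℕ} (hmeas : ∀ i, Measurable (Q i))
    (hindep : iIndepFun Q μ) (hpmf : ∀ i q, μ {ω | Q i ω = q} = (1 / 2 : ℝ≥0∞) ^ (q + 1)) :
    TendstoInMeasure μ (fun (n : ℕ) ω => (n : ℝ)⁻¹ * ∑ i : Fin n, (Q (i + 1) ω : ℝ)) atTop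
      fun _ => 1 := by
  set p : unitInterval := ⟨1 / 2, by norm_num, by norm_num⟩
  have hp : p ≠ 0 := fun h => by simpa [p] using congrArg Subtype.val h
  have hlaw : ∀ i, μ.map (Q i) = geometricMeasure p := fun i =>
    map_eq_geometricMeasure hp (hmeas i) fun q => by
      rw [hpmf]
      norm_num [p, ← pow_succ, ENNReal.ofReal_pow, ENNReal.ofReal_div_of_pos]
  let X : ℕ → Ω → ℝ := fun i ω => Q (i + 1) ω
  have hident : ∀ i, IdentDistrib (X i) (X 0) μ μ := fun i =>
    IdentDistrib.comp ⟨(hmeas _).aemeasurable, (hmeas _).aemeasurable,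
      (hlaw _).trans (hlaw _).symm⟩ measurable_from_nat
  have hint : Integrable (X 0) μ :=
    ((hlaw 1).symm ▸ integrable_natCast_geometricMeasure hp).comp_measurable (hmeas 1)
  have hmean : μ[X 0] = 1 := by
    rw [← integral_map (hmeas 1).aemeasurable measurable_from_nat.aestronglyMeasurable, hlaw,
      integral_natCast_geometricMeasure hp]
    norm_num [p]
  have hindepX : Pairwise ((· ⟂ᵢ[μ] ·) on X) := fun i j hij =>
    (hindep.indepFun (by simpa using hij)).comp measurable_from_nat measurable_from_nat
  have hlim := tendstoInMeasure_average hint hindepX hident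
  rw [hmean] at hlim
  convert hlim using 3 with n ω
  exact congrArg ((n : ℝ)⁻¹ * ·) (Fin.sum_univ_eq_sum_range (fun i => (Q (i + 1) ω : ℝ)) n)

/-- **Achievability, exhaustive search.** For i.i.d. geometric(1/2)
variables `(Q i)` and every `ε ∈ (0,1)`, for all sufficiently large `n` there is a finite
set `S ⊆ ℕ^n` of guesses with (i) `|S| ≤ 2^{n(2+ε)}`, (ii)
`P((Q_1,…,Q_n) ∈ S) > 1 − ε`, and (iii) every `q ∈ S` has `n(1−ε) ≤ Σ q_i ≤ n(1+ε)`,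
so that with `L = 3n` each guess `(1, n, q)` satisfies `2n + Σ q_i ≥ L(1 − ε/3)`. -/
theorem stmt_8
    {Ω : Type*} [MeasurableSpace Ω] (μ : Measure Ω) [IsProbabilityMeasure μ]
    (Q : ℕ → Ω → ℕ)
    (hmeas : ∀ i, Measurable (Q i))
    (hindep : iIndepFun Q μ)
    (hpmf : ∀ i q, μ {ω | Q i ω = q} = (1 / 2 : ℝ≥0∞) ^ (q + 1)) :
    ∀ ε : ℝ, 0 < ε → ε < 1 →
      ∃ n₀ : ℕ, ∀ n : ℕ, n₀ ≤ n →
        ∃ S : Finset (Fin n → ℕ),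
          (S.card : ℝ) ≤ 2 ^ ((n : ℝ) * (2 + ε)) ∧
          ENNReal.ofReal (1 - ε) < μ {ω | (fun i : Fin n => Q ((i : ℕ) + 1) ω) ∈ S} ∧
          ∀ q ∈ S,
            ((n : ℝ) * (1 - ε) ≤ ∑ i, (q i : ℝ) ∧ (∑ i, (q i : ℝ)) ≤ (n : ℝ) * (1 + ε)) ∧
            ((3 * n : ℝ) * (1 - ε / 3) ≤ 2 * (n : ℝ) + ∑ i, (q i : ℝ)) := by
  intro ε hε hε1
  have hlim := tendstoInMeasure_iff_dist.1
    (tendstoInMeasure_average_of_measure_eq_half_pow hmeas hindep hpmf) ε hε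
  obtain ⟨n₀, hn₀⟩ := eventually_atTop.1 ((tendsto_order.1 hlim).2 _ (ofReal_pos.2 hε))
  refine ⟨max n₀ 1, fun n hn => ?_⟩
  obtain ⟨S, hcard, hprob, hsum⟩ := exists_finset_of_measure_dist_average_lt (by omega) hε1
    (fun ω i => Q (i + 1) ω) (hn₀ n (le_of_max_le_left hn))
  exact ⟨S, hcard, hprob, fun q hq => ⟨hsum q hq, by linarith [(hsum q hq).1]⟩⟩
end

section
/- (Deterministic block reconstruction for ABSG.) Let (x_n)_{n≥1} be a binary sequence, let (y_i)_{i≥0} be its ABSG internal state sequence (y_0 = ∅, y_i = M(y_{i−1}, x_i)), let h_j denote the index of the j-th occurrence of ∅ in (y_i)_{i≥1} (h_0 = 0), q_j := h_j − h_{j−1} − 2, and let z_j be the j-th output bit. Then for every j ≥ 1 for which h_j is defined: if q_j = 0 then x_{h_{j−1}+1} = x_{h_{j−1}+2} = z_j; and if q_j ≥ 1 then x_{h_{j−1}+1} = 1 − z_j, x_{h_{j−1}+1+m} = z_j for all 1 ≤ m ≤ q_j, and x_{h_j} = 1 − z_j. In particular the input block x_{h_{j−1}+1}, …, x_{h_j}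 is uniquely determined by the pair (z_j, q_j), and in all cases x_{h_{j−1}+2} = z_j. -/
/-! Between two consecutive visits of ∅ at `a < b`, the first input bit `s = x (a + 1)` is stored
in the state, every further bit inside the block must differ from `s` (a bit equal to `s` would
reset the state to ∅), and the bit `x b` that finally resets the state equals `s`. Hence
`h j ≥ h (j-1) + 2`, the block reads `s, !s, …, !s, s`, and the output bit is `s` when `q = 0`
and `!s` otherwise. -/

theorem absgM_some_eq_none_iff (s b : Bool) : absgM (some s) b = none ↔ s = b := by
  cases s <;> cases b <;> simp [absgM]

theorem absgM_some_of_ne_none {s b : Bool} (h : absgM (some s) b ≠ none) :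
    absgM (some s) b = some s := by
  cases s <;> cases b <;> simp_all [absgM]

theorem absgY_succ (x : ℕ → Bool) (i : ℕ) :
    absgY x (i + 1) = absgM (absgY x i) (x (i + 1)) :=
  rfl

theorem absgY_succ_of_eq_none {x : ℕ → Bool} {a : ℕ} (ha : absgY x a = none) :
    absgY x (a + 1) = some (x (a + 1)) := by
  rw [absgY_succ, ha]
  rfl

section Block

variable {x : ℕ → Bool} {a b : ℕ}

theorem absgY_eq_of_mem_block (ha : absgY x a = none)
    (hgap : ∀ i, a < i → i < b → absgY x i ≠ none) {c : ℕ} (hac : a < c) (hcb : c < b) :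
    absgY x c = some (x (a + 1)) := by
  induction c, (hac : a + 1 ≤ c) using Nat.le_induction with
  | base => exact absgY_succ_of_eq_none ha
  | succ c hac' ih =>
    have hne := hgap (c + 1) (by omega) hcb
    rw [absgY_succ, ih (by omega)] at hne ⊢
    exact absgM_some_of_ne_none hne

theorem absg_block_add_two_le (ha : absgY x a = none) (hb : absgY x b = none) (hab : a < b) :
    a + 2 ≤ b := by
  by_contra hlt
  have hba : b = a + 1 := by omega
  rw [hba, absgY_succ_of_eq_none ha] at hb
  cases hb

theorem absg_eq_not_of_mem_block (ha : absgY x a = none)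
    (hgap : ∀ i, a < i → i < b → absgY x i ≠ none) {i : ℕ} (hai : a + 1 < i) (hib : i < b) :
    x i = !x (a + 1) := by
  obtain ⟨c, rfl⟩ : ∃ c, i = c + 1 := ⟨i - 1, by omega⟩
  have hne := hgap (c + 1) (by omega) hib
  rw [absgY_succ, absgY_eq_of_mem_block ha hgap (by omega) (by omega), ne_eq,
    absgM_some_eq_none_iff] at hne
  exact Bool.eq_not.mpr (Ne.symm hne)

theorem absg_eq_of_block_end (ha : absgY x a = none)
    (hgap : ∀ i, a < i → i < b → absgY x i ≠ none) (hb : absgY x b = none) (hab : a < b) :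
    x b = x (a + 1) := by
  obtain ⟨c, rfl⟩ : ∃ c, b = c + 1 := ⟨b - 1, by omega⟩
  have h2 := absg_block_add_two_le ha hb hab
  rw [absgY_succ, absgY_eq_of_mem_block ha hgap (by omega) (by omega),
    absgM_some_eq_none_iff] at hb
  exact hb.symm

end Block

theorem absgH_lt_succ_and_absgY_eq_none {x : ℕ → Bool} {j : ℕ}
    (h : Set.Nonempty {i | absgH x j < i ∧ absgY x i = none}) :
    absgH x j < absgH x (j + 1) ∧ absgY x (absgH x (j + 1)) = none :=
  Nat.sInf_mem h

theorem absgY_ne_none_of_lt_absgH_succ {x : ℕ → Bool} {j i : ℕ} (hji : absgH x j < i)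
    (hij : i < absgH x (j + 1)) : absgY x i ≠ none :=
  fun hy => Nat.notMem_of_lt_sInf hij ⟨hji, hy⟩

theorem absgY_absgH_eq_none {x : ℕ → Bool} {k : ℕ}
    (hdef : ∀ m : ℕ, 1 ≤ m → m ≤ k →
      Set.Nonempty {i | absgH x (m - 1) < i ∧ absgY x i = none}) :
    absgY x (absgH x k) = none := by
  cases k with
  | zero => rfl
  | succ k => exact (absgH_lt_succ_and_absgY_eq_none (hdef (k + 1) (by omega) le_rfl)).2

theorem absgZ_eq {x : ℕ → Bool} {j : ℕ} {s : Bool} (hy : absgY x (absgH x j - 1) = some s) :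
    absgZ x j = if absgQ x j = 0 then s else !s := by
  rw [absgZ, hy]
  rfl

/-- **Deterministic block reconstruction for ABSG.** For every `j ≥ 1`
for which `h j` is defined: if `q j = 0` then `x (h (j−1) + 1) = x (h (j−1) + 2) = z j`;
if `q j ≥ 1` then `x (h (j−1) + 1) = ¬ z j`, `x (h (j−1) + 1 + m) = z j` for
`1 ≤ m ≤ q j`, and `x (h j) = ¬ z j`. In all cases `x (h (j−1) + 2) = z j`, so the input
block `x (h (j−1) + 1), …, x (h j)` is uniquely determined by the pair `(z j, q j)`. -/
theorem stmt_16 (x : ℕ → Bool) (j : ℕ) (hj : 1 ≤ j)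
    (hdef : ∀ m : ℕ, 1 ≤ m → m ≤ j →
      Set.Nonempty {i | absgH x (m - 1) < i ∧ absgY x i = none}) :
    (absgQ x j = 0 →
      x (absgH x (j - 1) + 1) = absgZ x j ∧ x (absgH x (j - 1) + 2) = absgZ x j) ∧
    (1 ≤ absgQ x j →
      x (absgH x (j - 1) + 1) = !(absgZ x j) ∧
      (∀ m : ℕ, 1 ≤ m → m ≤ absgQ x j → x (absgH x (j - 1) + 1 + m) = absgZ x j) ∧
      x (absgH x j) = !(absgZ x j)) ∧
    x (absgH x (j - 1) + 2) = absgZ x j := by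
  obtain ⟨k, rfl⟩ : ∃ k, j = k + 1 := ⟨j - 1, by omega⟩
  have hq : absgQ x (k + 1) = absgH x (k + 1) - absgH x k - 2 := rfl
  simp only [Nat.add_sub_cancel]
  set a := absgH x k
  set b := absgH x (k + 1)
  obtain ⟨hab, hb⟩ := absgH_lt_succ_and_absgY_eq_none (j := k) (hdef (k + 1) (by omega) le_rfl)
  have ha : absgY x a = none := absgY_absgH_eq_none fun m hm hmk => hdef m hm (by omega)
  have hgap : ∀ i, a < i → i < b → absgY x i ≠ none := fun i => absgY_ne_none_of_lt_absgH_succ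
  have h2 := absg_block_add_two_le ha hb hab
  have hz := absgZ_eq (absgY_eq_of_mem_block ha hgap (c := b - 1) (by omega) (by omega))
  have hend := absg_eq_of_block_end ha hgap hb hab
  have hmid : ∀ i, a + 1 < i → i < b → x i = !x (a + 1) := fun i => absg_eq_not_of_mem_block ha hgap
  rw [hz, hq]
  refine ⟨fun hq0 => ?_, fun hq1 => ?_, ?_⟩
  · rw [if_pos hq0, show a + 2 = b by omega, hend]
    exact ⟨rfl, rfl⟩
  · rw [if_neg (by omega), Bool.not_not]
    exact ⟨rfl, fun m hm1 hmq => hmid _ (by omega) (by omega), hend⟩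
  · split_ifs with hq0
    · rw [show a + 2 = b by omega, hend]
    · exact hmid _ (by omega) (by omega)
end

section
/- Let (X_n)_{n≥1} be independent identically distributed random variables uniform on {0,1} and let (Y_i)_{i≥0} be the ABSG internal state sequence driven by X (Y_0 = ∅, Y_i = M(Y_{i−1}, X_i)). Then for every n ≥ 1 and every m ≥ 0, P( Y_{n+l} ≠ ∅ for all 0 ≤ l ≤ m ) = (2/3) · (1 − (−1/2)^n) · (1/2)^m. In particular this probability is at most (1/2)^m, so for any fixed n the probability that no ∅ occurs among m+1 consecutive states decays exponentially in m. -/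
/-!
Once the state is `some s`, it stays non-empty exactly as long as the input bits equal `!s`.
Hence `Y_n, …, Y_{n+m}` are all non-empty iff `Y_n = some s` and the next `m` bits are `!s`;
as `Y_n` is a function of `X_1, …, X_n`, independence gives `P(Y_n ≠ ∅) (1/2)^m`.
The case `m = 1` with bits `s` instead of `!s` gives `Y_{n+1} = ∅` iff `Y_n = some X_{n+1}`,
so `q_n = P(Y_n ≠ ∅)` satisfies `q_0 = 0`, `q_{n+1} = 1 - q_n / 2`,
whence `q_n = (2/3)(1 - (-1/2)^n)`.
-/

open MeasureTheory ProbabilityTheory ENNReal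

theorem absgM_eq_none_iff {y : Option Bool} {b : Bool} : absgM y b = none ↔ y = some b := by
  cases y <;> simp [absgM]

theorem absgM_some_not (s : Bool) : absgM (some s) (!s) = some s := by
  simp [absgM]

theorem dependsOn_absgY (n : ℕ) : DependsOn (absgY · n) (Set.Iic n) := by
  induction n with
  | zero => exact fun _ _ _ => rfl
  | succ n ih =>
    intro x y hxy
    exact congrArg₂ absgM (ih fun k hk => hxy k (Set.mem_Iic.2 (Nat.le_succ_of_le hk)))
      (hxy (n + 1) (Set.mem_Iic.2 le_rfl))

theorem absgY_add_of_forall_eq_not {x : ℕ → Bool} {n : ℕ} {s : Bool}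
    (h : absgY x n = some s) : ∀ {m}, (∀ l < m, x (n + l + 1) = !s) → absgY x (n + m) = some s
  | 0, _ => h
  | m + 1, hx => by
    rw [← add_assoc, absgY, absgY_add_of_forall_eq_not h fun l hl => hx l (by omega),
      hx m (by omega), absgM_some_not]

theorem forall_absgY_ne_none_iff {x : ℕ → Bool} {n : ℕ} :
    ∀ {m}, (∀ l ≤ m, absgY x (n + l) ≠ none) ↔
      ∃ s, absgY x n = some s ∧ ∀ l < m, x (n + l + 1) = !s
  | 0 => by simp [Option.ne_none_iff_exists', eq_comm]
  | m + 1 => by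
    constructor
    · intro h
      obtain ⟨s, hs, hrun⟩ := (forall_absgY_ne_none_iff (m := m)).1 fun l hl => h l (by omega)
      have hlast : absgY x (n + (m + 1)) ≠ none := h (m + 1) le_rfl
      rw [← add_assoc, absgY, absgY_add_of_forall_eq_not hs hrun, Ne, absgM_eq_none_iff] at hlast
      refine ⟨s, hs, fun l hl => ?_⟩
      rcases Nat.lt_succ_iff_lt_or_eq.1 hl with hl | rfl
      · exact hrun l hl
      · simpa [eq_comm, Bool.eq_not_iff] using hlast
    · rintro ⟨s, hs, hrun⟩ l hl
      rw [absgY_add_of_forall_eq_not hs fun l' hl' => hrun l' (by omega)]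
      exact Option.some_ne_none s

section Prefix

variable {Ω β : Type*} {X : ℕ → Ω → β} {N : ℕ} {F : (ℕ → β) → Prop}

theorem DependsOn.and_forall_eq (hF : DependsOn F (Set.Iic N)) (m : ℕ) (b : β) :
    DependsOn (fun x => F x ∧ ∀ l < m, x (N + l + 1) = b) (Set.Iic (N + m)) := by
  intro x y hxy
  have hpre : F x = F y := hF fun i hi => hxy i (Set.Iic_subset_Iic.2 (Nat.le_add_right N m) hi)
  have hrun : ∀ l < m, x (N + l + 1) = y (N + l + 1) := fun l hl =>
    hxy _ (Set.mem_Iic.2 (by omega))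
  simp only [hpre]
  exact propext (and_congr_right' (forall₂_congr fun l hl => by rw [hrun l hl]))

theorem exists_setOf_eq_preimage_of_dependsOn (hF : DependsOn F (Set.Iic N)) :
    ∃ A : Set (Finset.Iic N → β),
      {ω | F (X · ω)} = (fun ω (i : Finset.Iic N) => X i ω) ⁻¹' A := by
  rw [← Finset.coe_Iic, dependsOn_iff_exists_comp] at hF
  obtain ⟨g, rfl⟩ := hF
  exact ⟨{v | g v}, rfl⟩

variable [MeasurableSpace Ω] [MeasurableSpace β] [Finite β] [MeasurableSingletonClass β]

theorem measurableSet_setOf_of_dependsOn (hX : ∀ i, Measurable (X i))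
    (hF : DependsOn F (Set.Iic N)) : MeasurableSet {ω | F (X · ω)} := by
  obtain ⟨A, hA⟩ := exists_setOf_eq_preimage_of_dependsOn (X := X) hF
  rw [hA]
  exact (Set.toFinite A).measurableSet.preimage (measurable_pi_lambda _ fun i => hX i)

theorem measure_setOf_and_eq_mul_of_dependsOn (μ : Measure Ω) (hX : ∀ i, Measurable (X i))
    (hindep : iIndepFun X μ) (hF : DependsOn F (Set.Iic N)) {j : ℕ} (hj : N < j) (b : β) :
    μ {ω | F (X · ω) ∧ X j ω = b} = μ {ω | F (X · ω)} * μ {ω | X j ω = b} := by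
  obtain ⟨A, hA⟩ := exists_setOf_eq_preimage_of_dependsOn (X := X) hF
  have hdisj : Disjoint (Finset.Iic N) {j} := by simpa using hj
  have hind := (hindep.indepFun_finset _ _ hdisj hX).comp measurable_id
    (measurable_pi_apply ⟨j, Finset.mem_singleton_self j⟩)
  rw [Set.ofPred_and, hA]
  exact hind.measure_inter_preimage_eq_mul A {b} (Set.toFinite A).measurableSet
    (measurableSet_singleton b)

theorem measure_setOf_and_forall_eq_of_dependsOn (μ : Measure Ω) (hX : ∀ i, Measurable (X i))
    (hindep : iIndepFun X μ) (hF : DependsOn F (Set.Iic N)) {b : β} {c : ℝ≥0∞}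
    (hc : ∀ j, μ {ω | X j ω = b} = c) (m : ℕ) :
    μ {ω | F (X · ω) ∧ ∀ l < m, X (N + l + 1) ω = b} = μ {ω | F (X · ω)} * c ^ m := by
  induction m with
  | zero => simp
  | succ m ih =>
    simp_rw [Nat.forall_lt_succ_right, ← and_assoc]
    rw [measure_setOf_and_eq_mul_of_dependsOn μ hX hindep (hF.and_forall_eq m b)
      (by omega : N + m < N + m + 1), ih, hc, pow_succ, mul_assoc]

end Prefix

section Absg

variable {Ω : Type*} [MeasurableSpace Ω] {μ : Measure Ω} {X : ℕ → Ω → Bool}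

theorem dependsOn_absgY_eq (n : ℕ) (y : Option Bool) :
    DependsOn (fun x => absgY x n = y) (Set.Iic n) :=
  fun _ _ h => congrArg (· = y) (dependsOn_absgY n h)

theorem measure_setOf_exists_absgY_eq_some_and (hX : ∀ i, Measurable (X i))
    {P : Bool → Ω → Prop} (hP : ∀ s, MeasurableSet {ω | P s ω}) (n : ℕ) :
    μ {ω | ∃ s, absgY (X · ω) n = some s ∧ P s ω}
      = ∑ s, μ {ω | absgY (X · ω) n = some s ∧ P s ω} := by
  rw [Set.ofPred_exists, measure_iUnion, tsum_fintype]
  · intro s t hst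
    exact Set.disjoint_left.2 fun ω h1 h2 => hst (Option.some_injective _ (h1.1.symm.trans h2.1))
  · exact fun s =>
      (measurableSet_setOf_of_dependsOn hX (dependsOn_absgY_eq n (some s))).inter (hP s)

theorem measure_absgY_ne_none_eq_sum (hX : ∀ i, Measurable (X i)) (n : ℕ) :
    μ {ω | absgY (X · ω) n ≠ none} = ∑ s, μ {ω | absgY (X · ω) n = some s} := by
  have hset :
      {ω | absgY (X · ω) n ≠ none} = {ω | ∃ s, absgY (X · ω) n = some s ∧ True} := by
    simp only [and_true, Option.ne_none_iff_exists']
  rw [hset, measure_setOf_exists_absgY_eq_some_and hX (fun _ => .univ)]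
  simp only [and_true]

theorem measure_setOf_exists_absgY_eq_some_and_forall_eq (hX : ∀ i, Measurable (X i))
    (hindep : iIndepFun X μ) (hunif : ∀ i b, μ {ω | X i ω = b} = 1 / 2) (b : Bool → Bool)
    (n m : ℕ) :
    μ {ω | ∃ s, absgY (X · ω) n = some s ∧ ∀ l < m, X (n + l + 1) ω = b s}
      = μ {ω | absgY (X · ω) n ≠ none} * (1 / 2) ^ m := by
  have hrun (s : Bool) : MeasurableSet {ω | ∀ l < m, X (n + l + 1) ω = b s} := by
    simp only [Set.ofPred_forall]
    exact .iInter fun l => .iInter fun _ => hX _ (measurableSet_singleton (b s))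
  rw [measure_setOf_exists_absgY_eq_some_and hX hrun, measure_absgY_ne_none_eq_sum hX,
    Finset.sum_mul]
  exact Finset.sum_congr rfl fun s _ => measure_setOf_and_forall_eq_of_dependsOn μ hX hindep
    (dependsOn_absgY_eq n (some s)) (hunif · (b s)) m

theorem measure_forall_absgY_ne_none (hX : ∀ i, Measurable (X i)) (hindep : iIndepFun X μ)
    (hunif : ∀ i b, μ {ω | X i ω = b} = 1 / 2) (n m : ℕ) :
    μ {ω | ∀ l ≤ m, absgY (X · ω) (n + l) ≠ none}
      = μ {ω | absgY (X · ω) n ≠ none} * (1 / 2) ^ m := by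
  simp_rw [forall_absgY_ne_none_iff]
  exact measure_setOf_exists_absgY_eq_some_and_forall_eq hX hindep hunif (!·) n m

theorem measure_absgY_succ_eq_none (hX : ∀ i, Measurable (X i)) (hindep : iIndepFun X μ)
    (hunif : ∀ i b, μ {ω | X i ω = b} = 1 / 2) (n : ℕ) :
    μ {ω | absgY (X · ω) (n + 1) = none} = μ {ω | absgY (X · ω) n ≠ none} * (1 / 2) := by
  have hset : {ω | absgY (X · ω) (n + 1) = none}
      = {ω | ∃ s, absgY (X · ω) n = some s ∧ ∀ l < 1, X (n + l + 1) ω = s} := by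
    ext ω
    simp [absgY, absgM_eq_none_iff]
  rw [hset, ← pow_one (1 / 2 : ℝ≥0∞)]
  exact measure_setOf_exists_absgY_eq_some_and_forall_eq hX hindep hunif id n 1

theorem measureReal_absgY_ne_none [IsProbabilityMeasure μ] (hX : ∀ i, Measurable (X i))
    (hindep : iIndepFun X μ) (hunif : ∀ i b, μ {ω | X i ω = b} = 1 / 2) (n : ℕ) :
    μ.real {ω | absgY (X · ω) n ≠ none} = 2 / 3 * (1 - (-(1 / 2) : ℝ) ^ n) := by
  induction n with
  | zero => simp [absgY]
  | succ n ih =>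
    have hcompl :
        {ω | absgY (X · ω) (n + 1) ≠ none} = {ω | absgY (X · ω) (n + 1) = none}ᶜ := rfl
    rw [hcompl, probReal_compl_eq_one_sub
        (measurableSet_setOf_of_dependsOn hX (dependsOn_absgY_eq (n + 1) none)),
      measureReal_def, measure_absgY_succ_eq_none hX hindep hunif, ENNReal.toReal_mul,
      ← measureReal_def, ih]
    norm_num
    ring

end Absg

/-- If `(X n)_{n≥1}` are i.i.d. uniform bits and `(Y i)` is the ABSG
internal state sequence driven by `X`, then for every `n ≥ 1` and `m ≥ 0`,
`P(Y_{n+l} ≠ ∅ for all 0 ≤ l ≤ m) = (2/3)(1 − (−1/2)^n)(1/2)^m ≤ (1/2)^m`. -/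
theorem stmt_18
    {Ω : Type*} [MeasurableSpace Ω] (μ : Measure Ω) [IsProbabilityMeasure μ]
    (X : ℕ → Ω → Bool)
    (hmeas : ∀ i, Measurable (X i))
    (hindep : iIndepFun X μ)
    (hunif : ∀ i b, μ {ω | X i ω = b} = 1 / 2) :
    ∀ n : ℕ, 1 ≤ n → ∀ m : ℕ,
      μ {ω | ∀ l ≤ m, absgY (fun k => X k ω) (n + l) ≠ none}
          = ENNReal.ofReal ((2 / 3) * (1 - (-(1 / 2) : ℝ) ^ n) * (1 / 2) ^ m) ∧
      μ {ω | ∀ l ≤ m, absgY (fun k => X k ω) (n + l) ≠ none} ≤ (1 / 2 : ℝ≥0∞) ^ m := by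
  intro n _ m
  rw [measure_forall_absgY_ne_none hmeas hindep hunif n m]
  refine ⟨?_, mul_le_of_le_one_left' prob_le_one⟩
  rw [← measureReal_absgY_ne_none hmeas hindep hunif n, ENNReal.ofReal_mul measureReal_nonneg,
    ofReal_measureReal, ENNReal.ofReal_pow (by norm_num),
    show ENNReal.ofReal (1 / 2) = 1 / 2 by simp]
end
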